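/- arXiv:0802.2322 — 4 statements merged into one kernel-verified Lean document; each statement's English description precedes it below -/
import Mathlib

section
/- Suppose f is a Legendre function on ℝ^J, y ∈ U = int dom f, x is a farthest point of y in C, λ ≥ 1, and z := ∇f*(λ∇f(y) + (1−λ)∇f(x)) ∈ U. Then x is a farthest point of z in C. -/
/-!
`D_f(c, z) - D_f(x, z) = f c - f x - ⟪∇f(z), c - x⟫` is affine in `∇f(z)`, so for
`∇f(z) = λ∇f(y) + (1 - λ)∇f(x)` it equals `λ (D_f(c, y) - D_f(x, y)) - (λ - 1) D_f(c, x)`.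
The first term is `≤ 0` because `x` is farthest from `y`, the second `≥ 0` by convexity of `f`.
-/

open scoped RealInnerProductSpace

noncomputable abbrev bregman {J : ℕ}
    (f : EuclideanSpace ℝ (Fin J) → ℝ) (f' : EuclideanSpace ℝ (Fin J) → EuclideanSpace ℝ (Fin J))
    (x y : EuclideanSpace ℝ (Fin J)) : ℝ :=
  f x - f y - ⟪f' y, x - y⟫

theorem ConvexOn.hasFDerivAt_apply_sub_le {E : Type*} [NormedAddCommGroup E] [NormedSpace ℝ E]
    {s : Set E} {f : E → ℝ} {f' : E →L[ℝ] ℝ} {x c : E} (hf : ConvexOn ℝ s f)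
    (hx : x ∈ s) (hc : c ∈ s) (hf' : HasFDerivAt f f' x) :
    f' (c - x) ≤ f c - f x := by
  let g : ℝ →ᵃ[ℝ] E := AffineMap.lineMap x c
  have hline : ConvexOn ℝ (g ⁻¹' s) (f ∘ g) := hf.comp_affineMap g
  have hderiv : HasDerivAt (f ∘ g) (f' (c - x)) 0 := by
    refine HasFDerivAt.comp_hasDerivAt (0 : ℝ) ?_ AffineMap.hasDerivAt_lineMap
    simpa [g] using hf'
  simpa [slope_def_field, g] using
    hline.le_slope_of_hasDerivAt (x := 0) (y := 1) (by simpa [g] using hx) (by simpa [g] using hc)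
      zero_lt_one hderiv

theorem bregman_nonneg {J : ℕ} {f : EuclideanSpace ℝ (Fin J) → ℝ}
    {f' : EuclideanSpace ℝ (Fin J) → EuclideanSpace ℝ (Fin J)} {s : Set (EuclideanSpace ℝ (Fin J))}
    {x c : EuclideanSpace ℝ (Fin J)} (hf : ConvexOn ℝ s f) (hx : x ∈ s) (hc : c ∈ s)
    (hf' : HasGradientAt f (f' x) x) :
    0 ≤ bregman f f' c x := by
  have := hf.hasFDerivAt_apply_sub_le hx hc hf'.hasFDerivAt
  simp only [InnerProductSpace.toDual_apply_apply] at this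
  linarith

theorem bregman_sub_bregman {J : ℕ} (f : EuclideanSpace ℝ (Fin J) → ℝ)
    (f' : EuclideanSpace ℝ (Fin J) → EuclideanSpace ℝ (Fin J)) (c x z : EuclideanSpace ℝ (Fin J)) :
    bregman f f' c z - bregman f f' x z = f c - f x - ⟪f' z, c - x⟫ := by
  have : c - z = (c - x) + (x - z) := by abel
  rw [bregman, bregman, this, inner_add_right]
  ring

theorem bregman_sub_bregman_of_gradient_eq {J : ℕ} (f : EuclideanSpace ℝ (Fin J) → ℝ)
    (f' : EuclideanSpace ℝ (Fin J) → EuclideanSpace ℝ (Fin J)) {c x y z : EuclideanSpace ℝ (Fin J)}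
    {lam : ℝ} (hz : f' z = lam • f' y + (1 - lam) • f' x) :
    bregman f f' c z - bregman f f' x z =
      lam * (bregman f f' c y - bregman f f' x y) - (lam - 1) * bregman f f' c x := by
  rw [bregman_sub_bregman, bregman_sub_bregman, hz, inner_add_left, real_inner_smul_left,
    real_inner_smul_left]
  ring

theorem farthest_of_pushout_general {J : ℕ}
    (f : EuclideanSpace ℝ (Fin J) → ℝ) (U : Set (EuclideanSpace ℝ (Fin J)))
    (hconv : StrictConvexOn ℝ U f)
    (f' : EuclideanSpace ℝ (Fin J) → EuclideanSpace ℝ (Fin J))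
    (hf' : ∀ y ∈ U, HasGradientAt f (f' y) y)
    (C : Set (EuclideanSpace ℝ (Fin J)))
    (hCU : C ⊆ U)
    (y : EuclideanSpace ℝ (Fin J))
    (x : EuclideanSpace ℝ (Fin J)) (hx : x ∈ C)
    (hfar : ∀ c ∈ C, bregman f f' c y ≤ bregman f f' x y)
    (lam : ℝ) (hlam : 1 ≤ lam)
    (z : EuclideanSpace ℝ (Fin J))
    (hzgrad : f' z = lam • f' y + (1 - lam) • f' x) :
    ∀ c ∈ C, bregman f f' c z ≤ bregman f f' x z := by
  intro c hc
  have hcy : bregman f f' c y - bregman f f' x y ≤ 0 := sub_nonpos.mpr (hfar c hc)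
  have hcx : 0 ≤ bregman f f' c x :=
    bregman_nonneg hconv.convexOn (hCU hx) (hCU hc) (hf' x (hCU hx))
  have hsplit := bregman_sub_bregman_of_gradient_eq f f' (c := c) hzgrad
  linarith [mul_nonpos_of_nonneg_of_nonpos (zero_le_one.trans hlam) hcy,
    mul_nonneg (sub_nonneg.mpr hlam) hcx]

/-- If `x` is a farthest point of `y` in `C` w.r.t. the left Bregman distance of a Legendre
function `f`, `λ ≥ 1`, and `z = ∇f*(λ∇f(y) + (1-λ)∇f(x)) ∈ U`, then `x` is a farthest
point of `z` in `C`. -/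
theorem farthest_of_pushout {J : ℕ}
    (f : EuclideanSpace ℝ (Fin J) → ℝ) (U : Set (EuclideanSpace ℝ (Fin J)))
    (hU : IsOpen U) (hUne : U.Nonempty)
    (hconv : StrictConvexOn ℝ U f)
    (f' : EuclideanSpace ℝ (Fin J) → EuclideanSpace ℝ (Fin J))
    (hf' : ∀ y ∈ U, HasGradientAt f (f' y) y)
    (hinj : ∀ a ∈ U, ∀ b ∈ U, f' a = f' b → a = b)
    (C : Set (EuclideanSpace ℝ (Fin J))) (hCne : C.Nonempty)
    (hCcp : IsCompact C) (hCU : C ⊆ U)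
    (y : EuclideanSpace ℝ (Fin J)) (hy : y ∈ U)
    (x : EuclideanSpace ℝ (Fin J)) (hx : x ∈ C)
    (hfar : ∀ c ∈ C, bregman f f' c y ≤ bregman f f' x y)
    (lam : ℝ) (hlam : 1 ≤ lam)
    (z : EuclideanSpace ℝ (Fin J)) (hz : z ∈ U)
    (hzgrad : f' z = lam • f' y + (1 - lam) • f' x) :
    ∀ c ∈ C, bregman f f' c z ≤ bregman f f' x z :=
  farthest_of_pushout_general f U hconv f' hf' C hCU y x hx hfar lam hlam z hzgrad
end

section
/- If C is D_f-Klee (each y ∈ U has a unique farthest point in C with respect to the left Bregman distance D_f), then C is a singleton. -/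
open scoped RealInnerProductSpace
open Set Filter Topology

/-!
Write base points as `y = g s`, so that `∇f y = s`, and let `X s` be the farthest point of `C`
from `g s`. Uniqueness of farthest points and compactness of `C` make `X` continuous, hence so is
the farthest distance `Ψ s = D_f(X s, g s)`; it is coercive because `D_f(c, g s) ≥ r ‖s‖ - const`
whenever a ball of radius `r` around `c` lies in `U`. At a minimiser `s₀` of `Ψ` the three-point
identity gives `⟪s - s₀, X s - g s⟫ ≤ 0` for every `s`, which forces `X s₀ = g s₀`: the point
`g s₀ ∈ C` is its own farthest point, so `D_f(c, g s₀) ≤ 0` on `C`, and strict convexity leaves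
`C = {g s₀}`.
-/

section Gradient

variable {E : Type*} [NormedAddCommGroup E] [InnerProductSpace ℝ E] [CompleteSpace E]
  {U : Set E} {f : E → ℝ} {x y : E} {G : E}

theorem ConvexOn.add_inner_sub_le_of_hasGradientAt (hf : ConvexOn ℝ U f) (hx : x ∈ U)
    (hy : y ∈ U) (hG : HasGradientAt f G y) : f y + ⟪G, x - y⟫ ≤ f x := by
  have hd : HasDerivAt (f ∘ (AffineMap.lineMap y x : ℝ →ᵃ[ℝ] E)) ⟪G, x - y⟫ 0 := by
    have := hG.hasFDerivAt.comp_hasDerivAt_of_eq (0 : ℝ)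
      (AffineMap.hasDerivAt_lineMap (a := y) (b := x)) (by simp)
    simpa using this
  have := (hf.comp_affineMap (AffineMap.lineMap y x : ℝ →ᵃ[ℝ] E)).le_slope_of_hasDerivAt
    (by simpa using hy) (by simpa using hx) one_pos hd
  simp only [slope_def_field, Function.comp_apply, AffineMap.lineMap_apply_one,
    AffineMap.lineMap_apply_zero, sub_zero, div_one] at this
  linarith

theorem StrictConvexOn.add_inner_sub_lt_of_hasGradientAt (hf : StrictConvexOn ℝ U f)
    (hx : x ∈ U) (hy : y ∈ U) (hxy : x ≠ y) (hG : HasGradientAt f G y) :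
    f y + ⟪G, x - y⟫ < f x := by
  have hmid : f ((1 / 2 : ℝ) • y + (1 / 2 : ℝ) • x) < 1 / 2 * f y + 1 / 2 * f x :=
    hf.2 hy hx hxy.symm (by norm_num : (0 : ℝ) < 1 / 2) (by norm_num : (0 : ℝ) < 1 / 2)
      (by norm_num)
  have hle := hf.convexOn.add_inner_sub_le_of_hasGradientAt
    (hf.1 hy hx (by norm_num : (0 : ℝ) ≤ 1 / 2) (by norm_num : (0 : ℝ) ≤ 1 / 2) (by norm_num))
    hy hG
  have hsub : (1 / 2 : ℝ) • y + (1 / 2 : ℝ) • x - y = (1 / 2 : ℝ) • (x - y) := by module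
  rw [hsub, real_inner_smul_right] at hle
  linarith

end Gradient

theorem eq_zero_of_forall_inner_sub_nonpos {E : Type*} [NormedAddCommGroup E]
    [InnerProductSpace ℝ E] {V : E → E} {s₀ : E} (hV : ContinuousAt V s₀)
    (h : ∀ s, ⟪s - s₀, V s⟫ ≤ 0) : V s₀ = 0 := by
  set v := V s₀
  have hlim : Tendsto (fun t : ℝ => ⟪v, V (s₀ + t • v)⟫) (𝓝[>] 0) (𝓝 ⟪v, v⟫) := by
    have hline : Tendsto (fun t : ℝ => s₀ + t • v) (𝓝 0) (𝓝 s₀) := by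
      have hc : Continuous fun t : ℝ => s₀ + t • v := by fun_prop
      simpa using hc.tendsto 0
    exact (Tendsto.inner (𝕜 := ℝ) tendsto_const_nhds (hV.tendsto.comp hline)).mono_left
      nhdsWithin_le_nhds
  have hev : ∀ᶠ t in 𝓝[>] (0 : ℝ), ⟪v, V (s₀ + t • v)⟫ ≤ 0 := by
    filter_upwards [self_mem_nhdsWithin] with t (ht : 0 < t)
    have := h (s₀ + t • v)
    rw [add_sub_cancel_left, real_inner_smul_left] at this
    exact nonpos_of_mul_nonpos_right this ht
  exact real_inner_self_nonpos.1 (le_of_tendsto hlim hev)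

theorem IsCompact.continuousAt_of_isMaxOn_unique {α β γ : Type*} [TopologicalSpace α]
    [TopologicalSpace β] [T2Space β] [TopologicalSpace γ] [Preorder γ] [OrderClosedTopology γ]
    {C : Set β} (hC : IsCompact C) {φ : α → β → γ}
    (hφ : ContinuousOn (fun p : α × β => φ p.1 p.2) (univ ×ˢ C)) {X : α → β}
    (hXC : ∀ a, X a ∈ C) (hX : ∀ a, IsMaxOn (φ a) C (X a)) {a₀ : α}
    (huniq : ∀ x ∈ C, IsMaxOn (φ a₀) C x → x = X a₀) : ContinuousAt X a₀ := by
  refine hC.tendsto_nhds_of_unique_mapClusterPt (Eventually.of_forall hXC)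
    fun x hxC hx => huniq x hxC fun c hc => ?_
  have hpair : MapClusterPt (a₀, x) (𝓝 a₀) fun a => (a, X a) := by
    rw [((𝓝 a₀).basis_sets.prod_nhds' (𝓝 x).basis_sets).mapClusterPt_iff_frequently]
    rintro ⟨s, t⟩ ⟨hs, ht⟩
    exact ((hx.frequently ht).and_eventually hs).mono fun a ha => ⟨ha.2, ha.1⟩
  have hclosed : IsClosed {p ∈ univ ×ˢ C | φ p.1 c ≤ φ p.1 p.2} := by
    have hc' : ContinuousOn (fun p : α × β => φ p.1 c) (univ ×ˢ C) :=
      hφ.comp (continuous_fst.prodMk continuous_const).continuousOn fun p _ => ⟨trivial, hc⟩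
    exact (isClosed_univ.prod hC.isClosed).isClosed_le hc' hφ
  exact (hclosed.mem_of_mapClusterPt hpair
    (Eventually.of_forall fun a => ⟨⟨trivial, hXC a⟩, hX a hc⟩)).2

section Bregman

variable {J : ℕ} {f : EuclideanSpace ℝ (Fin J) → ℝ}
  {f' g : EuclideanSpace ℝ (Fin J) → EuclideanSpace ℝ (Fin J)}
  {U C : Set (EuclideanSpace ℝ (Fin J))} {x y : EuclideanSpace ℝ (Fin J)}

theorem bregman_nonneg_s11 (hf : ConvexOn ℝ U f) (hx : x ∈ U) (hy : y ∈ U)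
    (hf'y : HasGradientAt f (f' y) y) : 0 ≤ bregman f f' x y := by
  have := hf.add_inner_sub_le_of_hasGradientAt hx hy hf'y
  linarith

theorem bregman_pos (hf : StrictConvexOn ℝ U f) (hx : x ∈ U) (hy : y ∈ U) (hxy : x ≠ y)
    (hf'y : HasGradientAt f (f' y) y) : 0 < bregman f f' x y := by
  have := hf.add_inner_sub_lt_of_hasGradientAt hx hy hxy hf'y
  linarith

theorem bregman_three_point (f : EuclideanSpace ℝ (Fin J) → ℝ)
    (f' : EuclideanSpace ℝ (Fin J) → EuclideanSpace ℝ (Fin J)) (x y z : EuclideanSpace ℝ (Fin J)) :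
    bregman f f' x y = bregman f f' x z + bregman f f' z y + ⟪f' z - f' y, x - z⟫ := by
  simp only [bregman, inner_sub_left, inner_sub_right]
  ring

theorem le_bregman_of_closedBall_subset (hf : ConvexOn ℝ U f) {c : EuclideanSpace ℝ (Fin J)}
    {r M : ℝ} (hr : 0 ≤ r) (hball : Metric.closedBall c r ⊆ U)
    (hM : ∀ z ∈ Metric.closedBall c r, f z ≤ M) (hy : y ∈ U) (hf'y : HasGradientAt f (f' y) y) :
    f c - M + r * ‖f' y‖ ≤ bregman f f' c y := by
  set z := c + (r / ‖f' y‖) • f' y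
  have hz : z ∈ Metric.closedBall c r := by
    rcases eq_or_ne (f' y) 0 with hv | hv
    · simp [z, hv, hr]
    · simp [z, dist_eq_norm, norm_smul, abs_of_nonneg hr, hv]
  have hinner : ⟪f' y, z - c⟫ = r * ‖f' y‖ := by
    rcases eq_or_ne (f' y) 0 with hv | hv
    · simp [z, hv]
    · rw [add_sub_cancel_left, real_inner_smul_right, real_inner_self_eq_norm_sq]
      field_simp
  have hzy := bregman_nonneg_s11 hf (hball hz) hy hf'y
  have hMz := hM z hz
  simp only [bregman, inner_sub_right] at hzy hinner ⊢
  linarith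

theorem tendsto_bregman_cocompact (hU : IsOpen U) (hf : ConvexOn ℝ U f)
    (hf' : ∀ y ∈ U, HasGradientAt f (f' y) y) (hgU : ∀ s, g s ∈ U) (hgr : ∀ s, f' (g s) = s)
    {c : EuclideanSpace ℝ (Fin J)} (hc : c ∈ U) :
    Tendsto (fun s => bregman f f' c (g s)) (cocompact _) atTop := by
  obtain ⟨r, hr, hball⟩ := Metric.nhds_basis_closedBall.mem_iff.1 (hU.mem_nhds hc)
  obtain ⟨z, -, hz⟩ := (isCompact_closedBall c r).exists_isMaxOn
    ⟨c, Metric.mem_closedBall_self hr.le⟩ ((HasGradientAt.continuousOn hf').mono hball)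
  refine tendsto_atTop_mono (fun s => ?_)
    (tendsto_atTop_add_const_left _ (f c - f z) (tendsto_norm_cocompact_atTop.const_mul_atTop hr))
  simpa [hgr] using le_bregman_of_closedBall_subset hf hr.le hball (fun y hy => hz hy) (hgU s)
    (hf' _ (hgU s))

theorem continuousOn_bregman_comp (hf' : ∀ y ∈ U, HasGradientAt f (f' y) y)
    (hgU : ∀ s, g s ∈ U) (hgr : ∀ s, f' (g s) = s) (hg : Continuous g) (hCU : C ⊆ U) :
    ContinuousOn (fun p : EuclideanSpace ℝ (Fin J) × EuclideanSpace ℝ (Fin J) =>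
      bregman f f' p.2 (g p.1)) (univ ×ˢ C) := by
  have hfU : ContinuousOn f U := HasGradientAt.continuousOn hf'
  have hfC : ContinuousOn (fun p : EuclideanSpace ℝ (Fin J) × EuclideanSpace ℝ (Fin J) =>
      f p.2) (univ ×ˢ C) := hfU.comp continuousOn_snd fun p hp => hCU hp.2
  have hfg : Continuous (f ∘ g) := hfU.comp_continuous hg hgU
  simp only [bregman, hgr]
  exact (hfC.sub (hfg.comp continuous_fst).continuousOn).sub (by fun_prop)

theorem exists_farthest_eq_self (hU : IsOpen U) (hf : ConvexOn ℝ U f)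
    (hf' : ∀ y ∈ U, HasGradientAt f (f' y) y) (hgU : ∀ s, g s ∈ U) (hgr : ∀ s, f' (g s) = s)
    (hg : Continuous g) (hCne : C.Nonempty) (hCU : C ⊆ U)
    {X : EuclideanSpace ℝ (Fin J) → EuclideanSpace ℝ (Fin J)} (hXcont : Continuous X)
    (hX : ∀ s, X s ∈ C ∧ IsMaxOn (fun c => bregman f f' c (g s)) C (X s)) : ∃ s, X s = g s := by
  obtain ⟨c₀, hc₀⟩ := hCne
  set Ψ := fun s => bregman f f' (X s) (g s)
  have hΨ : Continuous Ψ := (continuousOn_bregman_comp hf' hgU hgr hg hCU).comp_continuous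
    (continuous_id.prodMk hXcont) fun s => ⟨trivial, (hX s).1⟩
  obtain ⟨s₀, hs₀⟩ := hΨ.exists_forall_le <| tendsto_atTop_mono (fun s => (hX s).2 hc₀)
    (tendsto_bregman_cocompact hU hf hf' hgU hgr (hCU hc₀))
  refine ⟨s₀, sub_eq_zero.1 <| eq_zero_of_forall_inner_sub_nonpos (V := X - g)
    (hXcont.sub hg).continuousAt fun s => show ⟪s - s₀, X s - g s⟫ ≤ 0 from ?_⟩
  have hfar : bregman f f' (X s) (g s₀) ≤ Ψ s₀ := (hX s₀).2 (hX s).1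
  have hthree := bregman_three_point f f' (X s) (g s₀) (g s)
  rw [hgr, hgr] at hthree
  linarith [hs₀ s, bregman_nonneg_s11 hf (hgU s) (hgU s₀) (hf' _ (hgU s₀))]

end Bregman

theorem klee_set_is_singleton_general {J : ℕ}
    (f : EuclideanSpace ℝ (Fin J) → ℝ) (U : Set (EuclideanSpace ℝ (Fin J)))
    (hU : IsOpen U)
    (hconv : StrictConvexOn ℝ U f)
    (f' : EuclideanSpace ℝ (Fin J) → EuclideanSpace ℝ (Fin J))
    (hf' : ∀ y ∈ U, HasGradientAt f (f' y) y)
    (g : EuclideanSpace ℝ (Fin J) → EuclideanSpace ℝ (Fin J))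
    (hgU : ∀ s, g s ∈ U) (hgr : ∀ s, f' (g s) = s)
    (hgcont : Continuous g)
    (C : Set (EuclideanSpace ℝ (Fin J))) (hCne : C.Nonempty)
    (hCcp : IsCompact C) (hCU : C ⊆ U)
    (hKlee : ∀ y ∈ U, ∃! x, x ∈ C ∧ ∀ c ∈ C, bregman f f' c y ≤ bregman f f' x y) :
    ∃ c, C = {c} := by
  choose X hX hXuniq using fun s => hKlee (g s) (hgU s)
  have hXcont : Continuous X := continuous_iff_continuousAt.2 fun s =>
    hCcp.continuousAt_of_isMaxOn_unique (φ := fun s c => bregman f f' c (g s))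
      (continuousOn_bregman_comp hf' hgU hgr hgcont hCU)
      (fun s => (hX s).1) (fun s => (hX s).2) fun x hx hmax => hXuniq s x ⟨hx, hmax⟩
  obtain ⟨s, hs⟩ := exists_farthest_eq_self hU hconv.convexOn hf' hgU hgr hgcont hCne hCU
    hXcont hX
  refine ⟨g s, eq_singleton_iff_unique_mem.2 ⟨hs ▸ (hX s).1, fun c hc => ?_⟩⟩
  by_contra hne
  have hfar : bregman f f' c (g s) ≤ bregman f f' (g s) (g s) := hs ▸ (hX s).2 c hc
  have hself : bregman f f' (g s) (g s) = 0 := by simp only [bregman, sub_self, inner_zero_right]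
  exact (hfar.trans_eq hself).not_gt (bregman_pos hconv (hCU hc) (hgU s) hne (hf' _ (hgU s)))

/-- If every `y ∈ U` has a unique farthest point in `C` w.r.t. the left Bregman distance
(`C` is `D_f`-Klee), then `C` is a singleton. -/
theorem klee_set_is_singleton {J : ℕ}
    (f : EuclideanSpace ℝ (Fin J) → ℝ) (U : Set (EuclideanSpace ℝ (Fin J)))
    (hU : IsOpen U) (hUne : U.Nonempty)
    (hconv : StrictConvexOn ℝ U f)
    (f' : EuclideanSpace ℝ (Fin J) → EuclideanSpace ℝ (Fin J))
    (hf' : ∀ y ∈ U, HasGradientAt f (f' y) y)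
    (hcoer : Filter.Tendsto (fun x : EuclideanSpace ℝ (Fin J) => f x / ‖x‖)
      (Filter.comap norm Filter.atTop) Filter.atTop)
    (g : EuclideanSpace ℝ (Fin J) → EuclideanSpace ℝ (Fin J))
    (hgU : ∀ s, g s ∈ U) (hgr : ∀ s, f' (g s) = s) (hgl : ∀ y ∈ U, g (f' y) = y)
    (hgcont : Continuous g)
    (C : Set (EuclideanSpace ℝ (Fin J))) (hCne : C.Nonempty)
    (hCcp : IsCompact C) (hCU : C ⊆ U)
    (hKlee : ∀ y ∈ U, ∃! x, x ∈ C ∧ ∀ c ∈ C, bregman f f' c y ≤ bregman f f' x y) :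
    ∃ c, C = {c} :=
  klee_set_is_singleton_general f U hU hconv f' hf' g hgU hgr hgcont C hCne hCcp hCU hKlee
end

section
/- Suppose f is twice continuously differentiable on U with ∇²f(y) positive definite for all y ∈ U. Then the farthest-distance function g := sup_{c∈C} D_f(c,·) is differentiable at y ∈ U if and only if the farthest-point set Q_C(y) is a singleton. -/
/-! For `c ∈ C` the map `z ↦ D_f(c, z)` is differentiable at `y` with derivative
`-⟪c - y, ∇²f(y) ·⟫`, uniformly in `c` on the bounded set `C`, so this is an instance of Danskin's
theorem for `g = sup_{c ∈ C} D_f(c, ·)`. A farthest point `c` makes `D_f(c, ·)` touch `g` from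
below at `y`, so if `g` is differentiable at `y` its derivative is that of `D_f(c, ·)`; since
`∇²f(y)` is positive definite, these derivatives determine `c`. Conversely, if `x` is the only
farthest point, then by compactness every `c` far from `x` stays uniformly below the maximum for `z`
near `y`, while every `c` near `x` has derivative close to that of `D_f(x, ·)`; this squeezes `g`
between `D_f(x, ·)` and its first-order expansion plus `o(‖z - y‖)`. -/

open scoped RealInnerProductSpace

/-- The left Bregman farthest-point map `Q_C` of a compact set `C`. -/
def farthestSet {J : ℕ}
    (f : EuclideanSpace ℝ (Fin J) → ℝ) (f' : EuclideanSpace ℝ (Fin J) → EuclideanSpace ℝ (Fin J))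
    (C : Set (EuclideanSpace ℝ (Fin J))) (y : EuclideanSpace ℝ (Fin J)) :
    Set (EuclideanSpace ℝ (Fin J)) :=
  {c ∈ C | ∀ d ∈ C, bregman f f' d y ≤ bregman f f' c y}

open Set Filter Topology Asymptotics

theorem HasFDerivAt.eq_of_eventually_le_of_eq {E : Type*} [NormedAddCommGroup E] [NormedSpace ℝ E]
    {h g : E → ℝ} {h' g' : E →L[ℝ] ℝ} {y : E} (hh : HasFDerivAt h h' y) (hg : HasFDerivAt g g' y)
    (hle : ∀ᶠ z in 𝓝 y, h z ≤ g z) (heq : h y = g y) : h' = g' := by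
  have hmax : IsLocalMax (fun z => h z - g z) y :=
    hle.mono fun z hz => by simp only [heq, sub_self]; linarith
  exact sub_eq_zero.1 (hmax.hasFDerivAt_eq_zero (hh.sub hg))

theorem IsMaxOn.csSup_image_eq {α β : Type*} [ConditionallyCompleteLattice β] {f : α → β}
    {s : Set α} {a : α} (h : IsMaxOn f s a) (ha : a ∈ s) : sSup (f '' s) = f a :=
  IsGreatest.csSup_eq ⟨mem_image_of_mem f ha, forall_mem_image.2 fun _ hb => h hb⟩

section Danskin

variable {X E : Type*} [NormedAddCommGroup E] [NormedSpace ℝ E]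

def HasFDerivAtUniformlyOn (φ : X → E → ℝ) (L : X → E →L[ℝ] ℝ) (C : Set X) (y : E) : Prop :=
  ∀ ε > 0, ∀ᶠ z in 𝓝 y, ∀ c ∈ C, |φ c z - φ c y - L c (z - y)| ≤ ε * ‖z - y‖

variable {φ : X → E → ℝ} {L : X → E →L[ℝ] ℝ} {C : Set X} {y : E}

theorem HasFDerivAtUniformlyOn.hasFDerivAt (h : HasFDerivAtUniformlyOn φ L C y) {c : X}
    (hc : c ∈ C) : HasFDerivAt (φ c) (L c) y :=
  .of_isLittleO <| isLittleO_iff.2 fun ε hε => (h ε hε).mono fun _ hz => hz c hc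

variable [TopologicalSpace X]

theorem HasFDerivAtUniformlyOn.tendstoUniformlyOn (h : HasFDerivAtUniformlyOn φ L C y)
    (hC : IsCompact C) (hL : ContinuousOn L C) :
    TendstoUniformlyOn (fun z c => φ c z) (fun c => φ c y) (𝓝 y) C := by
  obtain ⟨M, hM⟩ := hC.exists_bound_of_continuousOn hL
  refine Metric.tendstoUniformlyOn_iff.2 fun η hη => ?_
  have hball : Metric.ball y (η / (|M| + 1)) ∈ 𝓝 y := Metric.ball_mem_nhds y (by positivity)
  filter_upwards [h 1 one_pos, hball] with z hz hzy c hc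
  rw [Metric.mem_ball, dist_eq_norm] at hzy
  have hLc : |L c (z - y)| ≤ |M| * ‖z - y‖ :=
    ((L c).le_opNorm _).trans <|
      mul_le_mul_of_nonneg_right ((hM c hc).trans (le_abs_self M)) (norm_nonneg _)
  have htri := abs_add_le (φ c z - φ c y - L c (z - y)) (L c (z - y))
  rw [sub_add_cancel] at htri
  rw [Real.dist_eq, abs_sub_comm]
  calc |φ c z - φ c y| ≤ (|M| + 1) * ‖z - y‖ := by linarith [hz c hc]
    _ < η := (lt_div_iff₀' (by positivity)).1 hzy

theorem HasFDerivAtUniformlyOn.eventually_forall_lt_of_isCompact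
    (h : HasFDerivAtUniformlyOn φ L C y) (hC : IsCompact C) (hL : ContinuousOn L C) {K : Set X}
    (hK : IsCompact K) (hKC : K ⊆ C) (hφ : ContinuousOn (φ · y) K) {x : X}
    (hlt : ∀ c ∈ K, φ c y < φ x y) :
    ∀ᶠ z in 𝓝 y, ∀ c ∈ K, φ c z < φ x y + L x (z - y) := by
  obtain ⟨b, hbx, hb⟩ : ∃ b < φ x y, ∀ c ∈ K, φ c y ≤ b := by
    obtain ⟨a, hax, ha⟩ := hK.exists_forall_le' hφ.neg fun c hc => neg_lt_neg (hlt c hc)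
    exact ⟨-a, by linarith, fun c hc => le_neg_of_le_neg (ha c hc)⟩
  have hunif := Metric.tendstoUniformlyOn_iff.1 ((h.tendstoUniformlyOn hC hL).mono hKC)
    ((φ x y - b) / 2) (by linarith)
  have hLx : ∀ᶠ z in 𝓝 y, -((φ x y - b) / 2) < L x (z - y) :=
    Tendsto.eventually_const_lt (by linarith) <|
      ((L x).continuous.comp (continuous_sub_right y)).tendsto' y 0 (by simp)
  filter_upwards [hunif, hLx] with z hzunif hzLx c hc
  have hcz := hzunif c hc
  rw [Real.dist_eq, abs_sub_lt_iff] at hcz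
  linarith [hb c hc]

theorem fderiv_sSup_image_eq_of_isMaxOn (h : HasFDerivAtUniformlyOn φ L C y) (hC : IsCompact C)
    (hφ : ∀ z, ContinuousOn (φ · z) C)
    (hg : DifferentiableAt ℝ (fun z => sSup ((φ · z) '' C)) y) {c : X} (hc : c ∈ C)
    (hmax : IsMaxOn (φ · y) C c) : fderiv ℝ (fun z => sSup ((φ · z) '' C)) y = L c := by
  refine ((h.hasFDerivAt hc).eq_of_eventually_le_of_eq hg.hasFDerivAt (.of_forall fun z => ?_)
    (hmax.csSup_image_eq hc).symm).symm
  exact le_csSup (hC.image_of_continuousOn (hφ z)).bddAbove (mem_image_of_mem _ hc)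

theorem hasFDerivAt_sSup_image_of_unique_isMaxOn (h : HasFDerivAtUniformlyOn φ L C y)
    (hC : IsCompact C) (hφ : ∀ z, ContinuousOn (φ · z) C) (hL : ContinuousOn L C) {x : X}
    (hx : {c ∈ C | ∀ d ∈ C, φ d y ≤ φ c y} = {x}) :
    HasFDerivAt (fun z => sSup ((φ · z) '' C)) (L x) y := by
  obtain ⟨⟨hxC, hxmax⟩, huniq⟩ := eq_singleton_iff_unique_mem.1 hx
  have hstrict : ∀ c ∈ C, c ≠ x → φ c y < φ x y := fun c hc hne =>
    (hxmax c hc).lt_of_not_ge fun hle => hne (huniq c ⟨hc, fun d hd => (hxmax d hd).trans hle⟩)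
  refine .of_isLittleO <| isLittleO_iff.2 fun ε hε => ?_
  -- Near `x` the derivatives `L c` are close to `L x`; off a neighbourhood of `x`, compactness
  -- keeps `φ c` strictly below the maximum.
  obtain ⟨V, hVo, hxV, hV⟩ : ∃ V, IsOpen V ∧ x ∈ V ∧ V ∩ C ⊆ {c | dist (L c) (L x) < ε / 2} :=
    mem_nhdsWithin.1 <| (hL x hxC).tendsto.eventually (Metric.ball_mem_nhds _ (half_pos hε))
  have hfar := h.eventually_forall_lt_of_isCompact hC hL (hC.diff hVo) sdiff_subset
    ((hφ y).mono sdiff_subset) fun c hc => hstrict c hc.1 fun hcx => hc.2 (hcx ▸ hxV)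
  filter_upwards [h (ε / 2) (half_pos hε), hfar] with z hz hzfar
  have hupper : sSup ((φ · z) '' C) ≤ φ x y + L x (z - y) + ε * ‖z - y‖ := by
    refine csSup_le ⟨_, mem_image_of_mem _ hxC⟩ (forall_mem_image.2 fun c hc => ?_)
    by_cases hcV : c ∈ V
    · have hcz := (abs_le.1 (hz c hc)).2
      have hcL : ‖L c - L x‖ < ε / 2 := dist_eq_norm (L c) (L x) ▸ hV ⟨hcV, hc⟩
      have hLc : L c (z - y) - L x (z - y) ≤ ε / 2 * ‖z - y‖ :=
        calc L c (z - y) - L x (z - y) = (L c - L x) (z - y) := rfl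
          _ ≤ ‖L c - L x‖ * ‖z - y‖ := (le_abs_self _).trans ((L c - L x).le_opNorm _)
          _ ≤ ε / 2 * ‖z - y‖ := by gcongr
      linarith [hxmax c hc]
    · linarith [hzfar c ⟨hc, hcV⟩, mul_nonneg hε.le (norm_nonneg (z - y))]
  have hlower : φ x z ≤ sSup ((φ · z) '' C) :=
    le_csSup (hC.image_of_continuousOn (hφ z)).bddAbove (mem_image_of_mem _ hxC)
  rw [IsMaxOn.csSup_image_eq (f := (φ · y)) hxmax hxC, Real.norm_eq_abs, abs_le]
  constructor <;> linarith [(abs_le.1 (hz x hxC)).1, mul_nonneg hε.le (norm_nonneg (z - y))]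

theorem differentiableAt_sSup_image_iff (h : HasFDerivAtUniformlyOn φ L C y) (hC : IsCompact C)
    (hCne : C.Nonempty) (hφ : ∀ z, ContinuousOn (φ · z) C) (hL : ContinuousOn L C)
    (hLinj : InjOn L C) :
    DifferentiableAt ℝ (fun z => sSup ((φ · z) '' C)) y ↔
      ∃ x, {c ∈ C | ∀ d ∈ C, φ d y ≤ φ c y} = {x} := by
  refine ⟨fun hg => ?_, fun ⟨x, hx⟩ =>
    (hasFDerivAt_sSup_image_of_unique_isMaxOn h hC hφ hL hx).differentiableAt⟩
  obtain ⟨x, hxC, hxmax⟩ := hC.exists_isMaxOn hCne (hφ y)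
  refine ⟨x, eq_singleton_iff_unique_mem.2 ⟨⟨hxC, hxmax⟩, fun c ⟨hcC, hcmax⟩ => hLinj hcC hxC ?_⟩⟩
  rw [← fderiv_sSup_image_eq_of_isMaxOn h hC hφ hg hcC hcmax,
    fderiv_sSup_image_eq_of_isMaxOn h hC hφ hg hxC hxmax]

end Danskin

theorem injective_neg_innerSL_comp {E : Type*} [NormedAddCommGroup E] [InnerProductSpace ℝ E]
    {A : E →L[ℝ] E} (hA : ∀ v, v ≠ 0 → 0 < ⟪A v, v⟫) (y : E) :
    Function.Injective fun c => -(innerSL ℝ (c - y)).comp A := by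
  intro c d hcd
  by_contra hne
  have h := congrArg (fun T : E →L[ℝ] ℝ => T (c - d)) hcd
  simp only [neg_apply, ContinuousLinearMap.comp_apply, innerSL_apply_apply, neg_inj] at h
  have hzero : ⟪A (c - d), c - d⟫ = 0 := by
    rw [real_inner_comm, ← sub_eq_zero_of_eq h, ← inner_sub_left, sub_sub_sub_cancel_right]
  exact (hA (c - d) (sub_ne_zero.2 hne)).ne' hzero

section Bregman

variable {J : ℕ} {f : EuclideanSpace ℝ (Fin J) → ℝ}
  {f' : EuclideanSpace ℝ (Fin J) → EuclideanSpace ℝ (Fin J)}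
  {A : EuclideanSpace ℝ (Fin J) →L[ℝ] EuclideanSpace ℝ (Fin J)} {y : EuclideanSpace ℝ (Fin J)}

theorem hasFDerivAt_bregman (hf : HasGradientAt f (f' y) y) (hf' : HasFDerivAt f' A y)
    (c : EuclideanSpace ℝ (Fin J)) :
    HasFDerivAt (fun z => bregman f f' c z) (-(innerSL ℝ (c - y)).comp A) y := by
  have hA := hf'.inner ℝ ((hasFDerivAt_id y).const_sub c)
  refine ((hf.hasFDerivAt.const_sub (f c)).sub hA).congr_fderiv ?_
  ext v
  simp [fderivInnerCLM_apply, InnerProductSpace.toDual_apply_apply, inner_sub_right,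
    real_inner_comm, inner_neg_right]

theorem bregman_sub_bregman_sub (c z : EuclideanSpace ℝ (Fin J)) :
    bregman f f' c z - bregman f f' c y - (-(innerSL ℝ (c - y)).comp A) (z - y) =
      bregman f f' y z - ⟪f' z - f' y - A (z - y), c - y⟫ := by
  simp only [bregman, neg_apply, ContinuousLinearMap.comp_apply, innerSL_apply_apply,
    inner_sub_left, inner_sub_right, real_inner_comm]
  ring

theorem hasFDerivAtUniformlyOn_bregman (hf : HasGradientAt f (f' y) y) (hf' : HasFDerivAt f' A y)
    {C : Set (EuclideanSpace ℝ (Fin J))} (hC : Bornology.IsBounded C) :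
    HasFDerivAtUniformlyOn (fun c z => bregman f f' c z)
      (fun c => -(innerSL ℝ (c - y)).comp A) C y := by
  obtain ⟨R, hR⟩ := hC.subset_closedBall y
  have hD : (fun z => bregman f f' y z) =o[𝓝 y] (fun z => z - y) := by
    simpa [bregman] using (hasFDerivAt_bregman hf hf' y).isLittleO
  have hrem : (fun z => |bregman f f' y z| + R * ‖f' z - f' y - A (z - y)‖) =o[𝓝 y]
      (fun z => z - y) :=
    hD.norm_left.add (hf'.isLittleO.norm_left.const_mul_left R)
  intro ε hε
  filter_upwards [isLittleO_iff.1 hrem hε] with z hz c hc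
  rw [bregman_sub_bregman_sub]
  have hcR : ‖c - y‖ ≤ R := mem_closedBall_iff_norm.1 (hR hc)
  calc |bregman f f' y z - ⟪f' z - f' y - A (z - y), c - y⟫|
      ≤ |bregman f f' y z| + ‖f' z - f' y - A (z - y)‖ * ‖c - y‖ :=
        (abs_sub _ _).trans (add_le_add_right (abs_real_inner_le_norm _ _) _)
    _ ≤ |bregman f f' y z| + R * ‖f' z - f' y - A (z - y)‖ := by
        rw [mul_comm]; gcongr
    _ ≤ ε * ‖z - y‖ := (Real.le_norm_self _).trans hz

end Bregman

theorem farthest_distance_differentiable_iff_unique_farthest_general {J : ℕ}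
    (f : EuclideanSpace ℝ (Fin J) → ℝ) (U : Set (EuclideanSpace ℝ (Fin J)))
    (f' : EuclideanSpace ℝ (Fin J) → EuclideanSpace ℝ (Fin J))
    (hf' : ∀ y ∈ U, HasGradientAt f (f' y) y)
    (f'' : EuclideanSpace ℝ (Fin J) → EuclideanSpace ℝ (Fin J) →L[ℝ] EuclideanSpace ℝ (Fin J))
    (hf'' : ∀ y ∈ U, HasFDerivAt f' (f'' y) y)
    -- positive definiteness of the Hessians
    (hpos : ∀ y ∈ U, ∀ v : EuclideanSpace ℝ (Fin J), v ≠ 0 → 0 < ⟪f'' y v, v⟫)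
    (C : Set (EuclideanSpace ℝ (Fin J))) (hCne : C.Nonempty)
    (hCcp : IsCompact C) (hCU : C ⊆ U)
    (y : EuclideanSpace ℝ (Fin J)) (hy : y ∈ U) :
    DifferentiableAt ℝ (fun z => sSup ((fun c => bregman f f' c z) '' C)) y ↔
      ∃ x, farthestSet f f' C y = {x} := by
  have hfC : ContinuousOn f C := fun c hc => (hf' c (hCU hc)).continuousAt.continuousWithinAt
  have hφ (z : EuclideanSpace ℝ (Fin J)) : ContinuousOn (fun c => bregman f f' c z) C :=
    (hfC.sub continuousOn_const).sub (by fun_prop)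
  have hL : Continuous fun c => -(innerSL ℝ (c - y)).comp (f'' y) := by fun_prop
  exact differentiableAt_sSup_image_iff (hasFDerivAtUniformlyOn_bregman (hf' y hy) (hf'' y hy)
    hCcp.isBounded) hCcp hCne hφ hL.continuousOn (injective_neg_innerSL_comp (hpos y hy) y).injOn

/-- If `f` is twice continuously differentiable with positive definite Hessians, then the
farthest-distance function is differentiable at `y ∈ U` iff `Q_C(y)` is a singleton. -/
theorem farthest_distance_differentiable_iff_unique_farthest {J : ℕ}
    (f : EuclideanSpace ℝ (Fin J) → ℝ) (U : Set (EuclideanSpace ℝ (Fin J)))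
    (hU : IsOpen U) (hUne : U.Nonempty)
    (hconv : StrictConvexOn ℝ U f)
    (f' : EuclideanSpace ℝ (Fin J) → EuclideanSpace ℝ (Fin J))
    (hf' : ∀ y ∈ U, HasGradientAt f (f' y) y)
    (hcoer : Filter.Tendsto (fun x : EuclideanSpace ℝ (Fin J) => f x / ‖x‖)
      (Filter.comap norm Filter.atTop) Filter.atTop)
    (f'' : EuclideanSpace ℝ (Fin J) → EuclideanSpace ℝ (Fin J) →L[ℝ] EuclideanSpace ℝ (Fin J))
    (hf'' : ∀ y ∈ U, HasFDerivAt f' (f'' y) y)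
    (hf''cont : ContinuousOn f'' U)
    -- positive definiteness of the Hessians
    (hpos : ∀ y ∈ U, ∀ v : EuclideanSpace ℝ (Fin J), v ≠ 0 → 0 < ⟪f'' y v, v⟫)
    (C : Set (EuclideanSpace ℝ (Fin J))) (hCne : C.Nonempty)
    (hCcp : IsCompact C) (hCU : C ⊆ U)
    (y : EuclideanSpace ℝ (Fin J)) (hy : y ∈ U) :
    DifferentiableAt ℝ (fun z => sSup ((fun c => bregman f f' c z) '' C)) y ↔
      ∃ x, farthestSet f f' C y = {x} :=
  farthest_distance_differentiable_iff_unique_farthest_general f U f' hf' f'' hf'' hpos C hCne hCcp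
    hCU y hy
end

section
/- For x ∈ −C, a vector s ∈ ℝ^J belongs to the convex subdifferential ∂(−f∨ + ι_{−C})(x) if and only if −x is a farthest point of ∇f*(s) in C with respect to D_f. -/
/-!
Since `∇f(∇f*(s)) = s`, the map `c ↦ D_f(c, ∇f*(s))` differs from `c ↦ f c - ⟪s, c⟫` by a
constant, so the farthest points of `∇f*(s)` in `C` are the maximisers of `f - ⟪s, ·⟫` on `C`.
The Fenchel–Young equality at `x` says exactly that the supremum of this function over the
compact set `C` is attained at `-x`.
-/

open scoped RealInnerProductSpace

theorem csSup_image_eq_iff_isMaxOn {α β : Type*} [ConditionallyCompleteLattice β]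
    {φ : α → β} {C : Set α} {a : α} (ha : a ∈ C) (hbdd : BddAbove (φ '' C)) :
    sSup (φ '' C) = φ a ↔ IsMaxOn φ C a :=
  ⟨fun h _ hc => h ▸ le_csSup hbdd (Set.mem_image_of_mem φ hc),
    fun h => (h.isLUB ha).csSup_eq ⟨φ a, a, ha, rfl⟩⟩

theorem bregman_le_bregman_iff {J : ℕ}
    (f : EuclideanSpace ℝ (Fin J) → ℝ) (f' : EuclideanSpace ℝ (Fin J) → EuclideanSpace ℝ (Fin J))
    (c c' y : EuclideanSpace ℝ (Fin J)) :
    bregman f f' c y ≤ bregman f f' c' y ↔ f c - ⟪f' y, c⟫ ≤ f c' - ⟪f' y, c'⟫ := by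
  simp only [bregman, inner_sub_right]
  constructor <;> intro h <;> linarith

/-- `s ∈ ∂(−f∨ + ι_{−C})(x)` is encoded by the Fenchel–Young equality, using
`(−f∨ + ι_{−C})*(s) = sup_{c∈C}(f(c) − ⟪s,c⟫)`. -/
theorem subdifferential_iff_farthest_general {J : ℕ}
    (f : EuclideanSpace ℝ (Fin J) → ℝ) (U : Set (EuclideanSpace ℝ (Fin J)))
    (f' : EuclideanSpace ℝ (Fin J) → EuclideanSpace ℝ (Fin J))
    (hf' : ∀ y ∈ U, HasGradientAt f (f' y) y)
    (g : EuclideanSpace ℝ (Fin J) → EuclideanSpace ℝ (Fin J))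
    (hgr : ∀ s, f' (g s) = s)
    (C : Set (EuclideanSpace ℝ (Fin J)))
    (hCcp : IsCompact C) (hCU : C ⊆ U)
    (x : EuclideanSpace ℝ (Fin J)) (hx : x ∈ -C)
    (s : EuclideanSpace ℝ (Fin J)) :
    (-f (-x) + sSup ((fun c => f c - ⟪s, c⟫) '' C) = ⟪s, x⟫) ↔
      (-x ∈ C ∧ ∀ c ∈ C, bregman f f' c (g s) ≤ bregman f f' (-x) (g s)) := by
  have hxC : -x ∈ C := Set.mem_neg.mp hx
  have hfC : ContinuousOn f C := fun c hc => (hf' c (hCU hc)).continuousAt.continuousWithinAt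
  have hbdd : BddAbove ((fun c => f c - ⟪s, c⟫) '' C) :=
    hCcp.bddAbove_image (hfC.sub (continuous_const.inner continuous_id).continuousOn)
  have hfenchel : -f (-x) + sSup ((fun c => f c - ⟪s, c⟫) '' C) = ⟪s, x⟫ ↔
      sSup ((fun c => f c - ⟪s, c⟫) '' C) = f (-x) - ⟪s, -x⟫ := by
    rw [inner_neg_right]
    constructor <;> intro h <;> linarith
  rw [hfenchel, csSup_image_eq_iff_isMaxOn hxC hbdd, isMaxOn_iff]
  simp only [bregman_le_bregman_iff, hgr, hxC, true_and]

/-- For `x ∈ −C`, `s` lies in the convex subdifferential `∂(−f∨ + ι_{−C})(x)` (expressed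
by the Fenchel–Young equality, where `(−f∨ + ι_{−C})*(s) = sup_{c∈C}(f(c) − ⟪s,c⟫)`)
iff `−x` is a farthest point of `∇f*(s)` in `C` w.r.t. `D_f`. -/
theorem subdifferential_iff_farthest {J : ℕ}
    (f : EuclideanSpace ℝ (Fin J) → ℝ) (U : Set (EuclideanSpace ℝ (Fin J)))
    (hU : IsOpen U) (hUne : U.Nonempty)
    (hconv : StrictConvexOn ℝ U f)
    (f' : EuclideanSpace ℝ (Fin J) → EuclideanSpace ℝ (Fin J))
    (hf' : ∀ y ∈ U, HasGradientAt f (f' y) y)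
    (hcoer : Filter.Tendsto (fun x : EuclideanSpace ℝ (Fin J) => f x / ‖x‖)
      (Filter.comap norm Filter.atTop) Filter.atTop)
    (g : EuclideanSpace ℝ (Fin J) → EuclideanSpace ℝ (Fin J))
    (hgU : ∀ s, g s ∈ U) (hgr : ∀ s, f' (g s) = s) (hgl : ∀ y ∈ U, g (f' y) = y)
    (hgcont : Continuous g)
    (C : Set (EuclideanSpace ℝ (Fin J))) (hCne : C.Nonempty)
    (hCcp : IsCompact C) (hCU : C ⊆ U)
    (x : EuclideanSpace ℝ (Fin J)) (hx : x ∈ -C)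
    (s : EuclideanSpace ℝ (Fin J)) :
    (-f (-x) + sSup ((fun c => f c - ⟪s, c⟫) '' C) = ⟪s, x⟫) ↔
      (-x ∈ C ∧ ∀ c ∈ C, bregman f f' c (g s) ≤ bregman f f' (-x) (g s)) :=
  subdifferential_iff_farthest_general f U f' hf' g hgr C hCcp hCU x hx s
end
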